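/- arXiv:1402.1559 — 3 statements merged into one kernel-verified Lean document; each statement's English description precedes it below -/
import Mathlib

section
/- Let F be a p×k complex matrix, G a q×k complex matrix, γ > 0 a real number, and G_o an invertible k×k complex matrix satisfying G_oᴴG_o = γ²·I − GᴴG. If the spectral norm of the stacked matrix [F; G] satisfies ‖[F; G]‖ < γ, then ‖G‖ < γ and ‖F·G_o⁻¹‖ < 1. -/
/-!
For every vector `x`, `‖[F; G] x‖² = ‖F x‖² + ‖G x‖²` and, by the factorization,
`‖G_o x‖² = γ² ‖x‖² - ‖G x‖²`. Writing `N = ‖[F; G]‖ < γ`, the first identity gives `‖G‖ ≤ N`, and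
`γ² ‖F x‖² ≤ γ² (N² ‖x‖² - ‖G x‖²) ≤ N² (γ² ‖x‖² - ‖G x‖²) = N² ‖G_o x‖²`,
so substituting `x = G_o⁻¹ y` gives `‖F G_o⁻¹‖ ≤ N / γ < 1`.
-/

open Matrix

/-- The spectral norm (ℓ²→ℓ² operator norm, largest singular value) of a complex matrix. -/
noncomputable def specNorm {m n : Type*} [Fintype m] [Fintype n] [DecidableEq n]
    (M : Matrix m n ℂ) : ℝ :=
  ‖LinearMap.toContinuousLinearMap (Matrix.toEuclideanLin M)‖

namespace Matrix

variable {𝕜 : Type*} [RCLike 𝕜] {m₁ m₂ n : Type*} [Fintype m₁] [Fintype m₂] [Fintype n]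
  [DecidableEq n]

lemma norm_sq_toEuclideanLin_fromRows (A : Matrix m₁ n 𝕜) (B : Matrix m₂ n 𝕜)
    (x : EuclideanSpace 𝕜 n) :
    ‖toEuclideanLin (fromRows A B) x‖ ^ 2 = ‖toEuclideanLin A x‖ ^ 2 + ‖toEuclideanLin B x‖ ^ 2 := by
  simp only [EuclideanSpace.norm_sq_eq, ofLp_toLpLin, toLin'_apply, fromRows_mulVec,
    Fintype.sum_sum_type, Sum.elim_inl, Sum.elim_inr]

lemma re_inner_toEuclideanLin_conjTranspose_mul_self [DecidableEq m₁] (A : Matrix m₁ n 𝕜)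
    (x : EuclideanSpace 𝕜 n) :
    RCLike.re (inner 𝕜 x (toEuclideanLin (Aᴴ * A) x)) = ‖toEuclideanLin A x‖ ^ 2 := by
  rw [toLpLin_mul _ 2, LinearMap.comp_apply, toEuclideanLin_conjTranspose_eq_adjoint,
    LinearMap.adjoint_inner_right, inner_self_eq_norm_sq]

lemma norm_sq_toEuclideanLin_of_conjTranspose_mul_self_eq_sub [DecidableEq m₁] [DecidableEq m₂]
    {A : Matrix m₁ n 𝕜} {B : Matrix m₂ n 𝕜} {c : ℝ} (h : Aᴴ * A = c • 1 - Bᴴ * B)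
    (x : EuclideanSpace 𝕜 n) :
    ‖toEuclideanLin A x‖ ^ 2 = c * ‖x‖ ^ 2 - ‖toEuclideanLin B x‖ ^ 2 := by
  rw [← re_inner_toEuclideanLin_conjTranspose_mul_self, h, map_sub, LinearMap.sub_apply,
    inner_sub_right, map_sub, re_inner_toEuclideanLin_conjTranspose_mul_self,
    RCLike.real_smul_eq_coe_smul (K := 𝕜), map_smul, toLpLin_one, LinearMap.smul_apply,
    LinearMap.id_apply, inner_smul_right, RCLike.re_ofReal_mul, inner_self_eq_norm_sq]

end Matrix

section specNorm

variable {m n : Type*} [Fintype m] [Fintype n] [DecidableEq n]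

lemma specNorm_nonneg (M : Matrix m n ℂ) : 0 ≤ specNorm M := norm_nonneg _

lemma norm_toEuclideanLin_le_specNorm (M : Matrix m n ℂ) (x : EuclideanSpace ℂ n) :
    ‖toEuclideanLin M x‖ ≤ specNorm M * ‖x‖ :=
  (LinearMap.toContinuousLinearMap (toEuclideanLin M)).le_opNorm x

lemma specNorm_le_of_forall_norm_le {M : Matrix m n ℂ} {c : ℝ} (hc : 0 ≤ c)
    (h : ∀ x, ‖toEuclideanLin M x‖ ≤ c * ‖x‖) : specNorm M ≤ c :=
  ContinuousLinearMap.opNorm_le_bound _ hc h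

end specNorm

section fromRows

variable {m₁ m₂ n : Type*} [Fintype m₁] [Fintype m₂] [Fintype n] [DecidableEq n]

lemma norm_sq_add_norm_sq_le_specNorm_fromRows_sq (A : Matrix m₁ n ℂ) (B : Matrix m₂ n ℂ)
    (x : EuclideanSpace ℂ n) :
    ‖toEuclideanLin A x‖ ^ 2 + ‖toEuclideanLin B x‖ ^ 2
      ≤ specNorm (fromRows A B) ^ 2 * ‖x‖ ^ 2 := by
  rw [← norm_sq_toEuclideanLin_fromRows, ← mul_pow]
  gcongr
  exact norm_toEuclideanLin_le_specNorm _ x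

lemma specNorm_le_specNorm_fromRows_right (A : Matrix m₁ n ℂ) (B : Matrix m₂ n ℂ) :
    specNorm B ≤ specNorm (fromRows A B) := by
  refine specNorm_le_of_forall_norm_le (specNorm_nonneg _) fun x => ?_
  have hx := norm_sq_add_norm_sq_le_specNorm_fromRows_sq A B x
  rw [← pow_le_pow_iff_left₀ (norm_nonneg _)
    (mul_nonneg (specNorm_nonneg _) (norm_nonneg _)) two_ne_zero, mul_pow]
  nlinarith [sq_nonneg ‖toEuclideanLin A x‖]

lemma specNorm_mul_inv_le_div [DecidableEq m₂] {A : Matrix m₁ n ℂ} {B : Matrix m₂ n ℂ}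
    {C : Matrix n n ℂ} (hC : IsUnit C) {γ : ℝ} (hγ : 0 < γ)
    (hCB : Cᴴ * C = (γ ^ 2 : ℝ) • 1 - Bᴴ * B) (hN : specNorm (fromRows A B) ≤ γ) :
    specNorm (A * C⁻¹) ≤ specNorm (fromRows A B) / γ := by
  set N := specNorm (fromRows A B)
  refine specNorm_le_of_forall_norm_le (div_nonneg (specNorm_nonneg _) hγ.le) fun y => ?_
  set x := toEuclideanLin C⁻¹ y
  have hCx : toEuclideanLin C x = y := by
    rw [← LinearMap.comp_apply, ← toLpLin_mul,
      mul_nonsing_inv _ ((isUnit_iff_isUnit_det C).mp hC), toLpLin_one, LinearMap.id_apply]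
  have hAx : toEuclideanLin (A * C⁻¹) y = toEuclideanLin A x := by
    rw [toLpLin_mul _ 2, LinearMap.comp_apply]
  have hx := norm_sq_add_norm_sq_le_specNorm_fromRows_sq A B x
  have hy := norm_sq_toEuclideanLin_of_conjTranspose_mul_self_eq_sub hCB x
  rw [hCx] at hy
  have hNγ : N ^ 2 * ‖toEuclideanLin B x‖ ^ 2 ≤ γ ^ 2 * ‖toEuclideanLin B x‖ ^ 2 := by
    gcongr
    exact specNorm_nonneg _
  have hsq : (γ * ‖toEuclideanLin A x‖) ^ 2 ≤ (N * ‖y‖) ^ 2 :=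
    calc (γ * ‖toEuclideanLin A x‖) ^ 2 = γ ^ 2 * ‖toEuclideanLin A x‖ ^ 2 := mul_pow _ _ _
      _ ≤ γ ^ 2 * (N ^ 2 * ‖x‖ ^ 2 - ‖toEuclideanLin B x‖ ^ 2) := by gcongr; linarith
      _ ≤ N ^ 2 * (γ ^ 2 * ‖x‖ ^ 2 - ‖toEuclideanLin B x‖ ^ 2) := by linarith
      _ = (N * ‖y‖) ^ 2 := by rw [mul_pow, hy]
  rw [hAx, div_mul_eq_mul_div, le_div_iff₀ hγ, mul_comm]
  exact (pow_le_pow_iff_left₀ (by positivity)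
    (mul_nonneg (specNorm_nonneg _) (norm_nonneg _)) two_ne_zero).mp hsq

end fromRows

theorem specNorm_stacked_lt_imp_general (p q k : ℕ)
    (F : Matrix (Fin p) (Fin k) ℂ) (G : Matrix (Fin q) (Fin k) ℂ)
    (γ : ℝ)
    (Go : Matrix (Fin k) (Fin k) ℂ) (hGo : IsUnit Go)
    (hfact : Goᴴ * Go = ((γ : ℂ) ^ 2) • (1 : Matrix (Fin k) (Fin k) ℂ) - Gᴴ * G)
    (h : specNorm (Matrix.fromRows F G) < γ) :
    specNorm G < γ ∧ specNorm (F * Go⁻¹) < 1 := by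
  have hγ : 0 < γ := (specNorm_nonneg _).trans_lt h
  have hGoG : Goᴴ * Go = (γ ^ 2 : ℝ) • 1 - Gᴴ * G := by
    rw [hfact, ← Complex.coe_smul, Complex.ofReal_pow]
  refine ⟨(specNorm_le_specNorm_fromRows_right F G).trans_lt h, ?_⟩
  calc specNorm (F * Go⁻¹) ≤ specNorm (fromRows F G) / γ :=
        specNorm_mul_inv_le_div hGo hγ hGoG h.le
    _ < 1 := (div_lt_one hγ).mpr h

/-- If `‖[F; G]‖ < γ` and `G_oᴴ G_o = γ²·I − Gᴴ G` with `G_o` invertible,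
then `‖G‖ < γ` and `‖F G_o⁻¹‖ < 1`. -/
theorem specNorm_stacked_lt_imp (p q k : ℕ)
    (F : Matrix (Fin p) (Fin k) ℂ) (G : Matrix (Fin q) (Fin k) ℂ)
    (γ : ℝ) (hγ : 0 < γ)
    (Go : Matrix (Fin k) (Fin k) ℂ) (hGo : IsUnit Go)
    (hfact : Goᴴ * Go = ((γ : ℂ) ^ 2) • (1 : Matrix (Fin k) (Fin k) ℂ) - Gᴴ * G)
    (h : specNorm (Matrix.fromRows F G) < γ) :
    specNorm G < γ ∧ specNorm (F * Go⁻¹) < 1 :=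
  specNorm_stacked_lt_imp_general p q k F G γ Go hGo hfact h
end

section
/- Let T1 : 𝕋 → Matrix q₁ p₁ ℂ and T2 : 𝕋 → Matrix q₁ p₂ ℂ be continuous. Suppose: U_i : 𝕋 → Matrix q₁ p₂ ℂ is continuous and inner; U_o : 𝕋 → Matrix p₂ p₂ ℂ is continuous, belongs to H∞, is pointwise invertible with z ↦ U_o(z)⁻¹ in H∞, and T2(z) = U_i(z)U_o(z) for all z ∈ 𝕋. Define Y := (I − U_iU_i^∼)T1. Let γ > ‖Y‖∞, and suppose Y_o : 𝕋 → Matrix p₁ p₁ ℂ is continuous, pointwise invertible, with Y_o ∈ H∞, (Y_o)⁻¹ ∈ H∞, and Y_o(z)ᴴY_o(z) = γ²·I − Y(z)ᴴY(z) for all z ∈ 𝕋. Define R := U_i^∼·T1·Y_o⁻¹ (pointwise products). If Q : 𝕋 → Matrix p₂ p₁ ℂ is continuous with Q ∈ H∞, and X := U_o·Q·Y_o⁻¹ satisfies ‖R − X‖∞ ≤ 1, then ‖T1 − T2·Q‖∞ ≤ γ. -/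
open Matrix

/-- The `H∞` norm of a matrix-valued function on the unit circle:
`‖F‖∞ = sup_{z ∈ 𝕋} ‖F(z)‖`. -/
noncomputable def hinfNorm {m n : Type*} [Fintype m] [Fintype n] [DecidableEq n]
    (F : Circle → Matrix m n ℂ) : ℝ :=
  ⨆ z : Circle, specNorm (F z)

/-- A matrix-valued function `F` on the unit circle belongs to `H∞` if there is a
matrix-valued function `G`, continuous on the closed unit disc and analytic on the open
unit disc, with `F(z) = G(z⁻¹)` for all `z` on the circle. -/
def MemHInf {m n : Type*} (F : Circle → Matrix m n ℂ) : Prop :=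
  ∃ G : ℂ → Matrix m n ℂ,
    (∀ i j, ContinuousOn (fun w => G w i j) (Metric.closedBall (0 : ℂ) 1)) ∧
    (∀ i j, AnalyticOn ℂ (fun w => G w i j) (Metric.ball (0 : ℂ) 1)) ∧
    (∀ z : Circle, F z = G ((z : ℂ)⁻¹))

/-- The distance from `R` to `H∞` in the `‖·‖∞` norm:
`dist(R, H∞) = inf { ‖R − X‖∞ : X continuous, X ∈ H∞ }`. -/
noncomputable def distHInf {m n : Type*} [Fintype m] [Fintype n] [DecidableEq n]
    (R : Circle → Matrix m n ℂ) : ℝ :=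
  sInf {c : ℝ | ∃ X : Circle → Matrix m n ℂ,
    Continuous X ∧ MemHInf X ∧ c = hinfNorm fun z => R z - X z}

/-!
Pointwise on the circle, with `D = R - X` one has `T1 - T2 Q = Y + Ui D Yo`, and `Uiᴴ Y = 0`
because `1 - Ui Uiᴴ` projects onto the orthogonal complement of the range of the isometry `Ui`.
The cross terms therefore cancel and, in the Loewner order,
`(T1 - T2 Q)ᴴ (T1 - T2 Q) = Yᴴ Y + Yoᴴ (Dᴴ D) Yo ≤ Yᴴ Y + Yoᴴ Yo = γ² 1`,
since `‖D‖ ≤ 1` means `Dᴴ D ≤ 1`; and `Aᴴ A ≤ γ² 1` is exactly `‖A‖ ≤ γ`.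
-/

open scoped Matrix.Norms.L2Operator MatrixOrder ComplexOrder

section Algebra

variable {α : Type*} [Ring α] [StarRing α] {m n k l : Type*} [Fintype m] [Fintype k]

lemma conjTranspose_mul_one_sub_mul_conjTranspose_eq_zero [DecidableEq m] [DecidableEq k]
    (U : Matrix m k α) (hU : Uᴴ * U = 1) : Uᴴ * (1 - U * Uᴴ) = 0 := by
  rw [Matrix.mul_sub, Matrix.mul_one, ← Matrix.mul_assoc, hU, Matrix.one_mul, sub_self]

lemma conjTranspose_mul_self_add_mul_mul [Fintype l] [DecidableEq k] (Y : Matrix m n α)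
    (U : Matrix m k α) (D : Matrix k l α) (W : Matrix l n α) (hU : Uᴴ * U = 1)
    (hUY : Uᴴ * Y = 0) :
    (Y + U * D * W)ᴴ * (Y + U * D * W) = Yᴴ * Y + Wᴴ * (Dᴴ * D) * W := by
  have hYU : Yᴴ * U = 0 := by
    rw [← conjTranspose_conjTranspose U, ← conjTranspose_mul, hUY, conjTranspose_zero]
  simp only [conjTranspose_add, conjTranspose_mul, Matrix.add_mul, Matrix.mul_add,
    Matrix.mul_assoc]
  rw [hUY, ← Matrix.mul_assoc Yᴴ U, hYU, ← Matrix.mul_assoc Uᴴ U, hU]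
  simp only [Matrix.mul_zero, Matrix.zero_mul, Matrix.one_mul, add_zero, zero_add]

end Algebra

section SpectralNorm

variable {m n k l : Type*} [Fintype m] [Fintype n] [Fintype k] [Fintype l] [DecidableEq n]

lemma specNorm_eq_norm (M : Matrix m n ℂ) : specNorm M = ‖M‖ := rfl

lemma norm_le_iff_conjTranspose_mul_self_le (A : Matrix m n ℂ) {c : ℝ} (hc : 0 ≤ c) :
    ‖A‖ ≤ c ↔ Aᴴ * A ≤ ((c : ℂ) ^ 2) • (1 : Matrix n n ℂ) := by
  have h := CStarAlgebra.norm_le_iff_le_algebraMap (Aᴴ * A) (sq_nonneg c)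
    (nonneg_iff_posSemidef.2 (posSemidef_conjTranspose_mul_self A))
  rw [l2_opNorm_conjTranspose_mul_self, ← sq, sq_le_sq₀ (norm_nonneg A) hc,
    Algebra.algebraMap_eq_smul_one] at h
  rw [h, ← Complex.coe_smul]
  push_cast
  rfl

lemma norm_add_mul_mul_le [DecidableEq k] [DecidableEq l] (Y : Matrix m n ℂ)
    (U : Matrix m k ℂ) (D : Matrix k l ℂ) (W : Matrix l n ℂ) (hU : Uᴴ * U = 1)
    (hUY : Uᴴ * Y = 0) (hD : ‖D‖ ≤ 1) {γ : ℝ} (hγ : 0 ≤ γ)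
    (hW : Wᴴ * W = ((γ : ℂ) ^ 2) • 1 - Yᴴ * Y) : ‖Y + U * D * W‖ ≤ γ := by
  have hDD : (1 - Dᴴ * D).PosSemidef := by
    simpa [le_iff] using (norm_le_iff_conjTranspose_mul_self_le D zero_le_one).1 hD
  have hgap : ((γ : ℂ) ^ 2) • 1 - (Yᴴ * Y + Wᴴ * (Dᴴ * D) * W) = Wᴴ * (1 - Dᴴ * D) * W := by
    rw [Matrix.mul_sub, Matrix.sub_mul, Matrix.mul_one, hW]
    abel
  rw [norm_le_iff_conjTranspose_mul_self_le _ hγ,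
    conjTranspose_mul_self_add_mul_mul Y U D W hU hUY, le_iff, hgap]
  exact hDD.conjTranspose_mul_mul_same W

end SpectralNorm

lemma Continuous.matrix_inv {X 𝕜 n : Type*} [TopologicalSpace X] [Fintype n] [DecidableEq n]
    [Field 𝕜] [TopologicalSpace 𝕜] [IsTopologicalRing 𝕜] [ContinuousInv₀ 𝕜]
    {A : X → Matrix n n 𝕜} (hA : Continuous A) (hunit : ∀ x, IsUnit (A x)) :
    Continuous fun x => (A x)⁻¹ := by
  simp only [inv_def, Ring.inverse_eq_inv']
  exact (hA.matrix_det.inv₀ fun x => ((A x).isUnit_iff_isUnit_det.1 (hunit x)).ne_zero).smul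
    hA.matrix_adjugate

section HInfNorm

variable {m n : Type*} [Fintype m] [Fintype n] [DecidableEq n]

lemma hinfNorm_nonneg (F : Circle → Matrix m n ℂ) : 0 ≤ hinfNorm F :=
  Real.iSup_nonneg fun z => norm_nonneg (F z)

-- Continuity is what makes the supremum a bound: `⨆` of an unbounded family of reals is `0`.
lemma specNorm_le_hinfNorm {F : Circle → Matrix m n ℂ} (hF : Continuous F) (z : Circle) :
    specNorm (F z) ≤ hinfNorm F :=
  le_ciSup (isCompact_range (continuous_norm.comp hF)).bddAbove z

end HInfNorm

theorem hinf_1984_identity_suboptimal_general (q1 p1 p2 : ℕ)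
    (T1 : Circle → Matrix (Fin q1) (Fin p1) ℂ) (hT1 : Continuous T1)
    (T2 : Circle → Matrix (Fin q1) (Fin p2) ℂ)
    (Ui : Circle → Matrix (Fin q1) (Fin p2) ℂ) (hUic : Continuous Ui)
    (hUiInner : ∀ z, (Ui z)ᴴ * Ui z = 1)
    (Uo : Circle → Matrix (Fin p2) (Fin p2) ℂ) (hUoc : Continuous Uo)
    (hT2fact : ∀ z, T2 z = Ui z * Uo z)
    (Y : Circle → Matrix (Fin q1) (Fin p1) ℂ)
    (hY : Y = fun z => (1 - Ui z * (Ui z)ᴴ) * T1 z)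
    (γ : ℝ) (hγ : hinfNorm Y < γ)
    (Yo : Circle → Matrix (Fin p1) (Fin p1) ℂ) (hYoc : Continuous Yo)
    (hYoUnit : ∀ z, IsUnit (Yo z))
    (hYofact : ∀ z, (Yo z)ᴴ * Yo z
      = ((γ : ℂ) ^ 2) • (1 : Matrix (Fin p1) (Fin p1) ℂ) - (Y z)ᴴ * Y z)
    (R : Circle → Matrix (Fin p2) (Fin p1) ℂ)
    (hR : R = fun z => (Ui z)ᴴ * T1 z * (Yo z)⁻¹)
    (Q : Circle → Matrix (Fin p2) (Fin p1) ℂ) (hQc : Continuous Q)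
    (X : Circle → Matrix (Fin p2) (Fin p1) ℂ)
    (hX : X = fun z => Uo z * Q z * (Yo z)⁻¹)
    (hRX : hinfNorm (fun z => R z - X z) ≤ 1) :
    hinfNorm (fun z => T1 z - T2 z * Q z) ≤ γ := by
  have hγ0 : 0 ≤ γ := (hinfNorm_nonneg Y).trans hγ.le
  have hRXc : Continuous fun z => R z - X z := by
    have := hYoc.matrix_inv hYoUnit
    subst hR hX
    fun_prop
  refine ciSup_le fun z => ?_
  have hE : T1 z - T2 z * Q z = Y z + Ui z * (R z - X z) * Yo z := by
    simp only [hY, hR, hX]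
    rw [hT2fact, ← Matrix.sub_mul, Matrix.mul_assoc _ _ (Yo z), nonsing_inv_mul_cancel_right _ _
      ((Yo z).isUnit_iff_isUnit_det.1 (hYoUnit z)), Matrix.mul_sub, Matrix.sub_mul,
      Matrix.one_mul, ← Matrix.mul_assoc, ← Matrix.mul_assoc]
    abel
  have hUiY : (Ui z)ᴴ * Y z = 0 := by
    rw [hY, ← Matrix.mul_assoc, conjTranspose_mul_one_sub_mul_conjTranspose_eq_zero _ (hUiInner z),
      Matrix.zero_mul]
  have hD : ‖R z - X z‖ ≤ 1 := (specNorm_le_hinfNorm hRXc z).trans hRX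
  show specNorm (T1 z - T2 z * Q z) ≤ γ
  rw [hE, specNorm_eq_norm]
  exact norm_add_mul_mul_le _ _ _ _ (hUiInner z) hUiY hD hγ0 (hYofact z)

/-- "1984" H∞ control, `T3 = I` case (Theorem 1, part 2): if `‖R − X‖∞ ≤ 1` with
`X = U_o Q Y_o⁻¹` for some `Q ∈ H∞`, then `‖T1 − T2 Q‖∞ ≤ γ`. -/
theorem hinf_1984_identity_suboptimal (q1 p1 p2 : ℕ)
    (T1 : Circle → Matrix (Fin q1) (Fin p1) ℂ) (hT1 : Continuous T1)
    (T2 : Circle → Matrix (Fin q1) (Fin p2) ℂ) (hT2 : Continuous T2)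
    (Ui : Circle → Matrix (Fin q1) (Fin p2) ℂ) (hUic : Continuous Ui)
    (hUiInner : ∀ z, (Ui z)ᴴ * Ui z = 1)
    (Uo : Circle → Matrix (Fin p2) (Fin p2) ℂ) (hUoc : Continuous Uo)
    (hUoH : MemHInf Uo) (hUoUnit : ∀ z, IsUnit (Uo z))
    (hUoInvH : MemHInf fun z => (Uo z)⁻¹)
    (hT2fact : ∀ z, T2 z = Ui z * Uo z)
    (Y : Circle → Matrix (Fin q1) (Fin p1) ℂ)
    (hY : Y = fun z => (1 - Ui z * (Ui z)ᴴ) * T1 z)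
    (γ : ℝ) (hγ : hinfNorm Y < γ)
    (Yo : Circle → Matrix (Fin p1) (Fin p1) ℂ) (hYoc : Continuous Yo)
    (hYoUnit : ∀ z, IsUnit (Yo z)) (hYoH : MemHInf Yo)
    (hYoInvH : MemHInf fun z => (Yo z)⁻¹)
    (hYofact : ∀ z, (Yo z)ᴴ * Yo z
      = ((γ : ℂ) ^ 2) • (1 : Matrix (Fin p1) (Fin p1) ℂ) - (Y z)ᴴ * Y z)
    (R : Circle → Matrix (Fin p2) (Fin p1) ℂ)
    (hR : R = fun z => (Ui z)ᴴ * T1 z * (Yo z)⁻¹)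
    (Q : Circle → Matrix (Fin p2) (Fin p1) ℂ) (hQc : Continuous Q) (hQH : MemHInf Q)
    (X : Circle → Matrix (Fin p2) (Fin p1) ℂ)
    (hX : X = fun z => Uo z * Q z * (Yo z)⁻¹)
    (hRX : hinfNorm (fun z => R z - X z) ≤ 1) :
    hinfNorm (fun z => T1 z - T2 z * Q z) ≤ γ :=
  hinf_1984_identity_suboptimal_general q1 p1 p2 T1 hT1 T2 Ui hUic hUiInner Uo hUoc hT2fact Y hY γ
    hγ Yo hYoc hYoUnit hYofact R hR Q hQc X hX hRX
end

section
/- Let T1 : 𝕋 → Matrix q₁ p₁ ℂ, T2 : 𝕋 → Matrix q₁ p₂ ℂ, and T3 : 𝕋 → Matrix q₂ p₁ ℂ be continuous. Suppose: U_i : 𝕋 → Matrix q₁ p₂ ℂ is continuous and inner; U_o : 𝕋 → Matrix p₂ p₂ ℂ is continuous, in H∞, pointwise invertible with inverse in H∞, and T2 = U_i·U_o pointwise. Define Y := (I − U_iU_i^∼)T1; let γ > ‖Y‖∞ and let Y_o : 𝕋 → Matrix p₁ p₁ ℂ be continuous, pointwise invertible, with Y_o ∈ H∞, (Y_o)⁻¹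 ∈ H∞, and Y_oᴴY_o = γ²·I − YᴴY pointwise. Suppose V_ci : 𝕋 → Matrix q₂ p₁ ℂ is continuous, in H∞, co-inner (V_ci(z)·V_ci(z)ᴴ = I for all z), and V_co : 𝕋 → Matrix q₂ q₂ ℂ is continuous, in H∞, pointwise invertible with inverse in H∞, with T3·Y_o⁻¹ = V_co·V_ci pointwise. Define Z := U_i^∼·T1·Y_o⁻¹·(I − V_ci^∼V_ci); assume ‖Z‖∞ < 1, and let Z_co : 𝕋 → Matrix p₂ p₂ ℂ be continuous, pointwise invertible, with Z_co ∈ H∞, (Z_co)⁻¹ ∈ H∞, and Z_co·Z_co^∼ = I − Z·Z^∼ pointwise. Define R := Z_co⁻¹·U_i^∼·T1·Y_o⁻¹·V_ci^∼. If Q : 𝕋 → Matrix p₂ q₂ ℂ is continuous with Q ∈ H∞, and X := Z_co⁻¹·U_o·Q·V_co satisfies ‖R − X‖∞ ≤ 1, then ‖T1 − T2·Q·T3‖∞ ≤ γ. -/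
open Matrix

section Aux

open ContinuousLinearMap

local notation "⟪" x ", " y "⟫" => @inner ℂ _ _ x y

/-- Bundled continuous linear map of a rectangular complex matrix. -/
noncomputable def toCLM' {m n : Type*} [Fintype m] [Fintype n] [DecidableEq n]
    (M : Matrix m n ℂ) : EuclideanSpace ℂ n →L[ℂ] EuclideanSpace ℂ m :=
  LinearMap.toContinuousLinearMap (Matrix.toEuclideanLin M)

variable {m n k : Type*} [Fintype m] [Fintype n] [Fintype k]
  [DecidableEq m] [DecidableEq n] [DecidableEq k]

theorem specNorm_eq_toCLM' (M : Matrix m n ℂ) : specNorm M = ‖toCLM' M‖ := rfl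

theorem toCLM'_mul (A : Matrix m n ℂ) (B : Matrix n k ℂ) :
    toCLM' (A * B) = toCLM' A ∘L toCLM' B := by
  apply ContinuousLinearMap.ext
  intro x
  simp [toCLM', Matrix.toEuclideanLin_apply, Matrix.mulVec_mulVec]

theorem toCLM'_one : toCLM' (1 : Matrix n n ℂ) = 1 := by
  apply ContinuousLinearMap.ext
  intro x
  simp [toCLM', Matrix.toEuclideanLin_apply]

theorem toCLM'_sub (A B : Matrix m n ℂ) : toCLM' (A - B) = toCLM' A - toCLM' B := by
  simp [toCLM', map_sub]

theorem toCLM'_add (A B : Matrix m n ℂ) : toCLM' (A + B) = toCLM' A + toCLM' B := by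
  simp [toCLM', map_add]

theorem toCLM'_smul (c : ℂ) (A : Matrix m n ℂ) : toCLM' (c • A) = c • toCLM' A := by
  simp [toCLM', _root_.map_smul]

theorem toCLM'_adj (A : Matrix m n ℂ) :
    toCLM' Aᴴ = ContinuousLinearMap.adjoint (toCLM' A) := by
  rw [toCLM', Matrix.toEuclideanLin_conjTranspose_eq_adjoint,
    LinearMap.adjoint_toContinuousLinearMap]
  rfl

theorem continuous_specNorm : Continuous fun M : Matrix m n ℂ => specNorm M := by
  have : Continuous fun M : Matrix m n ℂ =>
      (LinearMap.toContinuousLinearMap (Matrix.toEuclideanLin M)) :=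
    LinearMap.continuous_of_finiteDimensional
      ((LinearMap.toContinuousLinearMap :
          (EuclideanSpace ℂ n →ₗ[ℂ] EuclideanSpace ℂ m) ≃ₗ[ℂ] _).toLinearMap.comp
        (Matrix.toEuclideanLin :
          Matrix m n ℂ ≃ₗ[ℂ] (EuclideanSpace ℂ n →ₗ[ℂ] EuclideanSpace ℂ m)).toLinearMap)
  exact continuous_norm.comp this

theorem continuous_matrix_inv' {X : Type*} [TopologicalSpace X]
    {A : X → Matrix n n ℂ} (hA : Continuous A) (hU : ∀ x, IsUnit (A x)) :
    Continuous fun x => (A x)⁻¹ := by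
  have hdet : Continuous fun x => (A x).det := hA.matrix_det
  have hdetne : ∀ x, (A x).det ≠ 0 := fun x =>
    ((Matrix.isUnit_iff_isUnit_det (A x)).mp (hU x)).ne_zero
  have : Continuous fun x => ((A x).det)⁻¹ • (A x).adjugate :=
    (hdet.inv₀ hdetne).smul hA.matrix_adjugate
  convert this using 2 with x
  rw [Matrix.inv_def, Ring.inverse_eq_inv']

variable {H K A B C H1 H2 K1 K2 : Type*}
  [NormedAddCommGroup H] [InnerProductSpace ℂ H] [CompleteSpace H]
  [NormedAddCommGroup K] [InnerProductSpace ℂ K] [CompleteSpace K]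
  [NormedAddCommGroup A] [InnerProductSpace ℂ A] [CompleteSpace A]
  [NormedAddCommGroup B] [InnerProductSpace ℂ B] [CompleteSpace B]
  [NormedAddCommGroup C] [InnerProductSpace ℂ C] [CompleteSpace C]
  [NormedAddCommGroup H1] [InnerProductSpace ℂ H1] [CompleteSpace H1]
  [NormedAddCommGroup H2] [InnerProductSpace ℂ H2] [CompleteSpace H2]
  [NormedAddCommGroup K1] [InnerProductSpace ℂ K1] [CompleteSpace K1]
  [NormedAddCommGroup K2] [InnerProductSpace ℂ K2] [CompleteSpace K2]

theorem pyth' (u : H →L[ℂ] K) (h : adjoint u ∘L u = 1) (v : K) :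
    ‖v‖ ^ 2 = ‖adjoint u v‖ ^ 2 + ‖v - u (adjoint u v)‖ ^ 2 := by
  have hpt : ∀ w : H, adjoint u (u w) = w := fun w => by
    simpa using ContinuousLinearMap.ext_iff.1 h w
  have h1 : ⟪u (adjoint u v), v⟫ = ⟪adjoint u v, adjoint u v⟫ :=
    (ContinuousLinearMap.adjoint_inner_right u (adjoint u v) v).symm
  have h2 : ⟪u (adjoint u v), u (adjoint u v)⟫ = ⟪adjoint u v, adjoint u v⟫ := by
    rw [← ContinuousLinearMap.adjoint_inner_left, hpt]
  have key : ⟪u (adjoint u v), v - u (adjoint u v)⟫ = 0 := by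
    rw [inner_sub_right, h1, h2, sub_self]
  have hdecomp : v = u (adjoint u v) + (v - u (adjoint u v)) := by abel
  have hnsq : ‖u (adjoint u v)‖ ^ 2 = ‖adjoint u v‖ ^ 2 := by
    have := congrArg RCLike.re h2
    simpa only [inner_self_eq_norm_sq] using this
  calc ‖v‖ ^ 2 = ‖u (adjoint u v) + (v - u (adjoint u v))‖ ^ 2 := by rw [← hdecomp]
    _ = ‖u (adjoint u v)‖ ^ 2 + 2 * RCLike.re ⟪u (adjoint u v), v - u (adjoint u v)⟫
        + ‖v - u (adjoint u v)‖ ^ 2 := norm_add_sq _ _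
    _ = ‖adjoint u v‖ ^ 2 + ‖v - u (adjoint u v)‖ ^ 2 := by rw [key, hnsq]; simp

theorem rowbound' (f : A →L[ℂ] C) (g : B →L[ℂ] C)
    (h : f ∘L adjoint f + g ∘L adjoint g = 1) (a : A) (b : B) :
    ‖f a + g b‖ ^ 2 ≤ ‖a‖ ^ 2 + ‖b‖ ^ 2 := by
  set v := f a + g b with hv
  have hsum : ∀ w : C, f (adjoint f w) + g (adjoint g w) = w := fun w => by
    simpa using ContinuousLinearMap.ext_iff.1 h w
  have hv2 : ‖v‖ ^ 2 = RCLike.re ⟪v, f a⟫ + RCLike.re ⟪v, g b⟫ := by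
    have : ⟪v, v⟫ = ⟪v, f a⟫ + ⟪v, g b⟫ := by rw [hv, inner_add_right]
    have := congrArg RCLike.re this
    simpa only [map_add, inner_self_eq_norm_sq] using this
  have c1 : RCLike.re ⟪v, f a⟫ ≤ ‖adjoint f v‖ * ‖a‖ := by
    rw [← ContinuousLinearMap.adjoint_inner_left]
    exact re_inner_le_norm (𝕜 := ℂ) _ _
  have c2 : RCLike.re ⟪v, g b⟫ ≤ ‖adjoint g v‖ * ‖b‖ := by
    rw [← ContinuousLinearMap.adjoint_inner_left]
    exact re_inner_le_norm (𝕜 := ℂ) _ _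
  have hnorm : ‖adjoint f v‖ ^ 2 + ‖adjoint g v‖ ^ 2 = ‖v‖ ^ 2 := by
    have e1 : ⟪adjoint f v, adjoint f v⟫ = ⟪v, f (adjoint f v)⟫ :=
      ContinuousLinearMap.adjoint_inner_left f (adjoint f v) v
    have e2 : ⟪adjoint g v, adjoint g v⟫ = ⟪v, g (adjoint g v)⟫ :=
      ContinuousLinearMap.adjoint_inner_left g (adjoint g v) v
    have : ⟪adjoint f v, adjoint f v⟫ + ⟪adjoint g v, adjoint g v⟫ = ⟪v, v⟫ := by
      rw [e1, e2, ← inner_add_right, hsum]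
    have := congrArg RCLike.re this
    simpa only [map_add, inner_self_eq_norm_sq] using this
  set s := ‖adjoint f v‖
  set t := ‖adjoint g v‖
  have hS : ‖v‖ ^ 2 ≤ s * ‖a‖ + t * ‖b‖ := by linarith
  have h3 : (s * ‖a‖ + t * ‖b‖) ^ 2 ≤ ‖v‖ ^ 2 * (‖a‖ ^ 2 + ‖b‖ ^ 2) := by
    nlinarith [sq_nonneg (s * ‖b‖ - t * ‖a‖)]
  rcases eq_or_lt_of_le (norm_nonneg v) with h0 | h0
  · rw [← h0]; simp; positivity
  · have hn2 : (0:ℝ) < ‖v‖ ^ 2 := by positivity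
    nlinarith [pow_le_pow_left₀ (by positivity) hS 2, sq_nonneg (s * ‖a‖ + t * ‖b‖)]

set_option maxHeartbeats 1000000 in
theorem key_op (γ : ℝ) (hγ : 0 ≤ γ)
    (t1 : H1 →L[ℂ] K1) (ui : H2 →L[ℂ] K1) (uo : H2 →L[ℂ] H2)
    (qq : K2 →L[ℂ] H2) (t3 : H1 →L[ℂ] K2)
    (yo yoi : H1 →L[ℂ] H1) (vci : H1 →L[ℂ] K2) (vco : K2 →L[ℂ] K2)
    (zco zcoi : H2 →L[ℂ] H2)
    (y : H1 →L[ℂ] K1) (zz : H1 →L[ℂ] H2) (δ : K2 →L[ℂ] H2)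
    (hui : adjoint ui ∘L ui = 1)
    (hvci : vci ∘L adjoint vci = 1)
    (hyo2 : yoi ∘L yo = 1)
    (hzco1 : zco ∘L zcoi = 1)
    (hy : ∀ w, y w = t1 w - ui (adjoint ui (t1 w)))
    (hyofact : ∀ w, adjoint y (y w) = ((γ:ℂ)^2) • w - adjoint yo (yo w))
    (ht3 : ∀ w, t3 (yoi w) = vco (vci w))
    (hz : ∀ w, zz w = adjoint ui (t1 (yoi w)) - adjoint ui (t1 (yoi (adjoint vci (vci w)))))
    (hzcofact : zco ∘L adjoint zco + zz ∘L adjoint zz = 1)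
    (hδ : ∀ w, δ w = zcoi (adjoint ui (t1 (yoi (adjoint vci w)))) - zcoi (uo (qq (vco w))))
    (hδn : ‖δ‖ ≤ 1)
    (e : H1 →L[ℂ] K1) (he : ∀ x, e x = t1 x - ui (uo (qq (t3 x)))) :
    ‖e‖ ≤ γ := by
  refine e.opNorm_le_bound hγ fun x => ?_
  have hui_pt : ∀ w, adjoint ui (ui w) = w := fun w => by
    simpa using ContinuousLinearMap.ext_iff.1 hui w
  have hvci_pt : ∀ w, vci (adjoint vci w) = w := fun w => by
    simpa using ContinuousLinearMap.ext_iff.1 hvci w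
  have hyo2_pt : ∀ w, yoi (yo w) = w := fun w => by
    simpa using ContinuousLinearMap.ext_iff.1 hyo2 w
  have hzco1_pt : ∀ w, zco (zcoi w) = w := fun w => by
    simpa using ContinuousLinearMap.ext_iff.1 hzco1 w
  set w := yo x with hw
  set uu := vci w with huu
  set wp := w - adjoint vci (vci w) with hwp
  have hx' : t1 x = t1 (yoi w) := by rw [hw, hyo2_pt]
  have ht3x : t3 x = vco uu := by rw [huu, hw, ← ht3, hyo2_pt]
  have hA : adjoint ui (e x) = zco (δ uu) + zz wp := by
    have h1 : zco (δ uu) = adjoint ui (t1 (yoi (adjoint vci uu))) - uo (qq (vco uu)) := by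
      rw [hδ, map_sub, hzco1_pt, hzco1_pt]
    have h2 : vci wp = 0 := by rw [hwp, map_sub, hvci_pt, sub_self]
    have h3 : zz wp = adjoint ui (t1 (yoi wp)) := by
      rw [hz, h2]; simp
    have h4 : adjoint vci uu + wp = w := by rw [hwp, huu]; abel
    have h5 : adjoint ui (t1 (yoi (adjoint vci uu))) + adjoint ui (t1 (yoi wp))
        = adjoint ui (t1 (yoi w)) := by
      rw [← h4]; simp [map_add]
    rw [he, map_sub, hui_pt, hx', ht3x, h1, h3, ← h5]; abel
  have hpyth2 : ‖w‖ ^ 2 = ‖uu‖ ^ 2 + ‖wp‖ ^ 2 := by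
    have hvci' : adjoint (adjoint vci) ∘L adjoint vci = 1 := by
      rw [adjoint_adjoint]; exact hvci
    have := pyth' (adjoint vci) hvci' w
    simpa [adjoint_adjoint, ← huu, ← hwp] using this
  have hδuu : ‖δ uu‖ ≤ ‖uu‖ := by
    calc ‖δ uu‖ ≤ ‖δ‖ * ‖uu‖ := δ.le_opNorm uu
      _ ≤ 1 * ‖uu‖ := mul_le_mul_of_nonneg_right hδn (norm_nonneg _)
      _ = ‖uu‖ := one_mul _
  have hB : ‖adjoint ui (e x)‖ ^ 2 ≤ ‖w‖ ^ 2 := by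
    rw [hA, hpyth2]
    have hrow := rowbound' zco zz hzcofact (δ uu) wp
    have : ‖δ uu‖ ^ 2 ≤ ‖uu‖ ^ 2 := pow_le_pow_left₀ (norm_nonneg _) hδuu 2
    linarith
  have hC : e x - ui (adjoint ui (e x)) = y x := by
    rw [he, map_sub, hui_pt, map_sub, hy]; abel
  have hD : ‖y x‖ ^ 2 = γ ^ 2 * ‖x‖ ^ 2 - ‖w‖ ^ 2 := by
    have h1 : ⟪y x, y x⟫ = ⟪adjoint y (y x), x⟫ :=
      (ContinuousLinearMap.adjoint_inner_left y x (y x)).symm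
    rw [hyofact] at h1
    have h2 : ⟪((γ:ℂ)^2) • x - adjoint yo (yo x), x⟫
        = ((γ^2 : ℝ)) • ⟪x, x⟫ - ⟪yo x, yo x⟫ := by
      rw [inner_sub_left, inner_smul_left, ContinuousLinearMap.adjoint_inner_left,
        Complex.real_smul, map_pow, Complex.conj_ofReal]
      push_cast
      ring
    have h3 := congrArg RCLike.re (h1.trans h2)
    rw [map_sub, RCLike.smul_re] at h3
    simp only [inner_self_eq_norm_sq] at h3
    exact h3
  have pythmain := pyth' ui hui (e x)
  rw [hC] at pythmain
  have hfin : ‖e x‖ ^ 2 ≤ (γ * ‖x‖) ^ 2 := by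
    rw [pythmain, hD]; nlinarith [hB]
  nlinarith [norm_nonneg (e x), mul_nonneg hγ (norm_nonneg x), hfin]

end Aux

/-- "1984" H∞ control, general `T3` case (Theorem 2, part 2): if `‖R − X‖∞ ≤ 1` with
`X = Z_co⁻¹ U_o Q V_co` for some `Q ∈ H∞`, then `‖T1 − T2 Q T3‖∞ ≤ γ`. -/
theorem hinf_1984_general_suboptimal (q1 q2 p1 p2 : ℕ)
    (T1 : Circle → Matrix (Fin q1) (Fin p1) ℂ) (hT1 : Continuous T1)
    (T2 : Circle → Matrix (Fin q1) (Fin p2) ℂ) (hT2 : Continuous T2)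
    (T3 : Circle → Matrix (Fin q2) (Fin p1) ℂ) (hT3 : Continuous T3)
    (Ui : Circle → Matrix (Fin q1) (Fin p2) ℂ) (hUic : Continuous Ui)
    (hUiInner : ∀ z, (Ui z)ᴴ * Ui z = 1)
    (Uo : Circle → Matrix (Fin p2) (Fin p2) ℂ) (hUoc : Continuous Uo)
    (hUoH : MemHInf Uo) (hUoUnit : ∀ z, IsUnit (Uo z))
    (hUoInvH : MemHInf fun z => (Uo z)⁻¹)
    (hT2fact : ∀ z, T2 z = Ui z * Uo z)
    (Y : Circle → Matrix (Fin q1) (Fin p1) ℂ)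
    (hY : Y = fun z => (1 - Ui z * (Ui z)ᴴ) * T1 z)
    (γ : ℝ) (hγ : hinfNorm Y < γ)
    (Yo : Circle → Matrix (Fin p1) (Fin p1) ℂ) (hYoc : Continuous Yo)
    (hYoUnit : ∀ z, IsUnit (Yo z)) (hYoH : MemHInf Yo)
    (hYoInvH : MemHInf fun z => (Yo z)⁻¹)
    (hYofact : ∀ z, (Yo z)ᴴ * Yo z
      = ((γ : ℂ) ^ 2) • (1 : Matrix (Fin p1) (Fin p1) ℂ) - (Y z)ᴴ * Y z)
    (Vci : Circle → Matrix (Fin q2) (Fin p1) ℂ) (hVcic : Continuous Vci)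
    (hVciH : MemHInf Vci) (hVciCoInner : ∀ z, Vci z * (Vci z)ᴴ = 1)
    (Vco : Circle → Matrix (Fin q2) (Fin q2) ℂ) (hVcoc : Continuous Vco)
    (hVcoH : MemHInf Vco) (hVcoUnit : ∀ z, IsUnit (Vco z))
    (hVcoInvH : MemHInf fun z => (Vco z)⁻¹)
    (hT3fact : ∀ z, T3 z * (Yo z)⁻¹ = Vco z * Vci z)
    (Z : Circle → Matrix (Fin p2) (Fin p1) ℂ)
    (hZ : Z = fun z => (Ui z)ᴴ * T1 z * (Yo z)⁻¹ * (1 - (Vci z)ᴴ * Vci z))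
    (hZnorm : hinfNorm Z < 1)
    (Zco : Circle → Matrix (Fin p2) (Fin p2) ℂ) (hZcoc : Continuous Zco)
    (hZcoUnit : ∀ z, IsUnit (Zco z)) (hZcoH : MemHInf Zco)
    (hZcoInvH : MemHInf fun z => (Zco z)⁻¹)
    (hZcofact : ∀ z, Zco z * (Zco z)ᴴ
      = (1 : Matrix (Fin p2) (Fin p2) ℂ) - Z z * (Z z)ᴴ)
    (R : Circle → Matrix (Fin p2) (Fin q2) ℂ)
    (hR : R = fun z => (Zco z)⁻¹ * (Ui z)ᴴ * T1 z * (Yo z)⁻¹ * (Vci z)ᴴ)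
    (Q : Circle → Matrix (Fin p2) (Fin q2) ℂ) (hQc : Continuous Q) (hQH : MemHInf Q)
    (X : Circle → Matrix (Fin p2) (Fin q2) ℂ)
    (hX : X = fun z => (Zco z)⁻¹ * Uo z * Q z * Vco z)
    (hRX : hinfNorm (fun z => R z - X z) ≤ 1) :
    hinfNorm (fun z => T1 z - T2 z * Q z * T3 z) ≤ γ := by
  classical
  -- γ is nonnegative
  have hγ0 : 0 ≤ γ := le_of_lt (lt_of_le_of_lt (Real.iSup_nonneg fun z => norm_nonneg _) hγ)
  -- continuity of R - X
  have hYoi : Continuous fun z => (Yo z)⁻¹ := continuous_matrix_inv' hYoc hYoUnit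
  have hZcoi : Continuous fun z => (Zco z)⁻¹ := continuous_matrix_inv' hZcoc hZcoUnit
  have hRc : Continuous R := by
    rw [hR]
    exact ((((hZcoi.matrix_mul hUic.matrix_conjTranspose).matrix_mul hT1).matrix_mul
      hYoi).matrix_mul hVcic.matrix_conjTranspose)
  have hXc : Continuous X := by
    rw [hX]
    exact ((hZcoi.matrix_mul hUoc).matrix_mul hQc).matrix_mul hVcoc
  have hΔc : Continuous fun z => specNorm (R z - X z) :=
    continuous_specNorm.comp (hRc.sub hXc)
  have hbdd : BddAbove (Set.range fun z => specNorm (R z - X z)) :=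
    (isCompact_range hΔc).bddAbove
  have hΔle : ∀ z, specNorm (R z - X z) ≤ 1 := fun z =>
    le_trans (le_ciSup hbdd z) hRX
  -- pointwise bound
  refine ciSup_le fun z => ?_
  rw [specNorm_eq_toCLM']
  -- matrix-level identities
  have hdetYo := (Matrix.isUnit_iff_isUnit_det (Yo z)).mp (hYoUnit z)
  have hdetZco := (Matrix.isUnit_iff_isUnit_det (Zco z)).mp (hZcoUnit z)
  have hYm : Y z = T1 z - Ui z * (Ui z)ᴴ * T1 z := by
    simp only [hY]; rw [Matrix.sub_mul, Matrix.one_mul]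
  have hZm : Z z = (Ui z)ᴴ * T1 z * (Yo z)⁻¹
      - (Ui z)ᴴ * T1 z * (Yo z)⁻¹ * ((Vci z)ᴴ * Vci z) := by
    simp only [hZ]; rw [Matrix.mul_sub, Matrix.mul_one]
  have hEm : T1 z - T2 z * Q z * T3 z = T1 z - Ui z * Uo z * Q z * T3 z := by
    rw [hT2fact]
  have hYofm : (Y z)ᴴ * Y z
      = ((γ : ℂ) ^ 2) • (1 : Matrix (Fin p1) (Fin p1) ℂ) - (Yo z)ᴴ * Yo z := by
    rw [eq_sub_iff_add_eq, add_comm, ← eq_sub_iff_add_eq]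
    exact hYofact z
  have hZcofm : Zco z * (Zco z)ᴴ + Z z * (Z z)ᴴ = 1 := by
    rw [← eq_sub_iff_add_eq]
    exact hZcofact z
  have hΔm : R z - X z = (Zco z)⁻¹ * (Ui z)ᴴ * T1 z * (Yo z)⁻¹ * (Vci z)ᴴ
      - (Zco z)⁻¹ * Uo z * Q z * Vco z := by rw [hR, hX]
  -- apply the operator lemma
  refine key_op γ hγ0 (toCLM' (T1 z)) (toCLM' (Ui z)) (toCLM' (Uo z)) (toCLM' (Q z))
    (toCLM' (T3 z)) (toCLM' (Yo z)) (toCLM' (Yo z)⁻¹) (toCLM' (Vci z)) (toCLM' (Vco z))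
    (toCLM' (Zco z)) (toCLM' (Zco z)⁻¹) (toCLM' (Y z)) (toCLM' (Z z))
    (toCLM' (R z - X z)) ?_ ?_ ?_ ?_ ?_ ?_ ?_ ?_ ?_ ?_ ?_ _ ?_
  · have := congrArg toCLM' (hUiInner z)
    simp only [toCLM'_mul, toCLM'_adj, toCLM'_one] at this
    exact this
  · have := congrArg toCLM' (hVciCoInner z)
    simp only [toCLM'_mul, toCLM'_adj, toCLM'_one] at this
    exact this
  · have := congrArg toCLM' (Matrix.nonsing_inv_mul (Yo z) hdetYo)
    simp only [toCLM'_mul, toCLM'_one] at this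
    exact this
  · have := congrArg toCLM' (Matrix.mul_nonsing_inv (Zco z) hdetZco)
    simp only [toCLM'_mul, toCLM'_one] at this
    exact this
  · intro w
    rw [hYm]
    simp only [toCLM'_sub, toCLM'_mul, toCLM'_adj]
    simp
  · intro w
    have := congrArg toCLM' hYofm
    simp only [toCLM'_mul, toCLM'_adj, toCLM'_sub, toCLM'_smul, toCLM'_one] at this
    have h2 := ContinuousLinearMap.ext_iff.1 this w
    simpa using h2
  · intro w
    have := congrArg toCLM' (hT3fact z)
    simp only [toCLM'_mul] at this
    have h2 := ContinuousLinearMap.ext_iff.1 this w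
    simpa using h2
  · intro w
    rw [hZm]
    simp only [toCLM'_sub, toCLM'_mul, toCLM'_adj]
    simp
  · have := congrArg toCLM' hZcofm
    simp only [toCLM'_add, toCLM'_mul, toCLM'_adj, toCLM'_one] at this
    exact this
  · intro w
    rw [hΔm]
    simp only [toCLM'_sub, toCLM'_mul, toCLM'_adj]
    simp
  · rw [← specNorm_eq_toCLM']
    exact hΔle z
  · intro x
    show toCLM' (T1 z - T2 z * Q z * T3 z) x = _
    rw [hEm]
    simp only [toCLM'_sub, toCLM'_mul]
    simp
end
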